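/- arXiv:1508.04522 — 3 statements merged into one kernel-verified Lean document; each statement's English description precedes it below -/
import Mathlib

section
/- Any algorithm that selects a specific item from a set of size n with probability exactly p, where 0 < p ≤ 1/n, using only fair coin tosses as randomness and maintaining a state from a finite state space between tosses, must have at least log₂(n) distinct reachable states (hence uses Ω(log log n) bits of memory). -/
/-- Any algorithm (modeled as a finite-state automaton over fair coin flips) that selects a
designated item with probability exactly `p`, `0 < p ≤ 1/n`, must have at least `log₂ n`
reachable states.  The acceptance probability is the sum over all minimal accepting coin-flip
sequences `w` of `(1/2)^|w|`. -/
theorem stmt_2 {S : Type*} [Fintype S] (δ : S → Bool → S) (s₀ : S) (Acc : S → Prop)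
    (n : ℕ) (p : ℝ)
    (hp : p = ∑' w : {w : List Bool // Acc (w.foldl δ s₀) ∧
        ∀ v : List Bool, v <+: w → v ≠ w → ¬ Acc (v.foldl δ s₀)},
        ((1 : ℝ) / 2) ^ (w : List Bool).length)
    (hp0 : 0 < p) (hpn : p ≤ 1 / n) :
    Real.logb 2 n ≤ Fintype.card S := by
  classical
  set T := {w : List Bool // Acc (w.foldl δ s₀) ∧
      ∀ v : List Bool, v <+: w → v ≠ w → ¬ Acc (v.foldl δ s₀)} with hT
  -- the index type is nonempty
  have hne : Nonempty T := by
    by_contra h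
    rw [not_nonempty_iff] at h
    rw [tsum_empty] at hp
    exact absurd hp (by linarith)
  obtain ⟨w₀, hw₀, _⟩ := hne.some
  -- shortest accepting word
  have hex : ∃ k, ∃ w : List Bool, w.length = k ∧ Acc (w.foldl δ s₀) :=
    ⟨w₀.length, w₀, rfl, hw₀⟩
  set L := Nat.find hex with hLdef
  obtain ⟨w, hwlen, hwacc⟩ := Nat.find_spec hex
  have hmin : ∀ k < L, ¬ ∃ v : List Bool, v.length = k ∧ Acc (v.foldl δ s₀) :=
    fun k hk => Nat.find_min hex hk
  -- run states are injective
  have hfold : ∀ i j : ℕ, i ≤ j → j ≤ L →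
      (w.take i).foldl δ s₀ = (w.take j).foldl δ s₀ →
      Acc ((w.take i ++ w.drop j).foldl δ s₀) := by
    intro i j hij hjL heq
    have : (w.take i ++ w.drop j).foldl δ s₀ = w.foldl δ s₀ := by
      rw [List.foldl_append, heq, ← List.foldl_append, List.take_append_drop]
    rw [this]; exact hwacc
  have hinj : Function.Injective (fun i : Fin (L + 1) => (w.take i).foldl δ s₀) := by
    intro i j hij
    by_contra hne'
    rcases Ne.lt_or_gt (fun h : i = j => hne' h) with h | h
    · have hi : (i : ℕ) < (j : ℕ) := h
      have hjL : (j : ℕ) ≤ L := Nat.lt_succ_iff.mp j.isLt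
      have hacc := hfold i j hi.le hjL hij
      have hlen : (w.take i ++ w.drop j).length < L := by
        rw [List.length_append, List.length_take, List.length_drop, hwlen]
        omega
      exact hmin _ hlen ⟨_, rfl, hacc⟩
    · have hi : (j : ℕ) < (i : ℕ) := h
      have hiL : (i : ℕ) ≤ L := Nat.lt_succ_iff.mp i.isLt
      have hacc := hfold j i hi.le hiL hij.symm
      have hlen : (w.take j ++ w.drop i).length < L := by
        rw [List.length_append, List.length_take, List.length_drop, hwlen]
        omega
      exact hmin _ hlen ⟨_, rfl, hacc⟩
  have hcard : L + 1 ≤ Fintype.card S := by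
    have := Fintype.card_le_of_injective _ hinj
    simpa using this
  -- w is minimal: no proper prefix accepts
  have hwmin : ∀ v : List Bool, v <+: w → v ≠ w → ¬ Acc (v.foldl δ s₀) := by
    intro v hpre hvne hvacc
    have hlt : v.length < w.length :=
      lt_of_le_of_ne hpre.length_le (fun h => hvne (List.IsPrefix.eq_of_length hpre h))
    rw [hwlen] at hlt
    exact hmin _ hlt ⟨v, rfl, hvacc⟩
  set a : T := ⟨w, hwacc, hwmin⟩ with ha
  -- summability
  have hsum : Summable (fun w : T => ((1 : ℝ) / 2) ^ (w : List Bool).length) := by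
    by_contra h
    rw [tsum_eq_zero_of_not_summable h] at hp
    linarith
  have hterm : ((1 : ℝ) / 2) ^ L ≤ p := by
    rw [hp]
    have := Summable.le_tsum hsum a (fun b _ => by positivity)
    simpa [ha, hwlen] using this
  -- n > 0
  have hn0 : 0 < n := by
    rcases Nat.eq_zero_or_pos n with h | h
    · subst h; simp at hpn; linarith
    · exact h
  -- n ≤ 2^L
  have hnle : (n : ℝ) ≤ 2 ^ L := by
    have h1 : ((1 : ℝ) / 2) ^ L ≤ 1 / n := le_trans hterm hpn
    have h2 : (0 : ℝ) < n := by exact_mod_cast hn0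
    rw [div_pow, one_pow, div_le_div_iff₀ (by positivity) h2] at h1
    linarith
  calc Real.logb 2 n ≤ Real.logb 2 (2 ^ L) :=
        Real.logb_le_logb_of_le one_lt_two (by exact_mod_cast hn0) (by exact_mod_cast hnle)
    _ = L := by
        rw [Real.logb_pow]
        simp [Real.logb_self_eq_one]
    _ ≤ Fintype.card S := by exact_mod_cast Nat.le_of_succ_le hcard
end

section
/- In the three-party disjointness construction for plurality: given sets X₁, X₂, X₃ ⊆ [m], consider the plurality election with candidate set [m+1] and vote multiset consisting of one approval for each element of X₁, X₂, X₃, plus two approvals for candidate m+1. If the X_i are pairwise disjoint, then m+1 is the unique plurality winner (score 2 versus at most 1 for others). If instead there exists y ∈ [m] with y ∈ X₁ ∩ X₂ ∩ X₃ and the sets X_i \ {y} are pairwise disjoint, then y is the unique plurality winner (score 3 versus at most 2 for others). -/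
lemma cnt_last {m : ℕ} (X : Finset (Fin m)) :
    (X.val.map Fin.castSucc).count (Fin.last m) = 0 := by
  rw [Multiset.count_eq_zero]
  simp only [Multiset.mem_map]
  rintro ⟨x, -, hx⟩
  exact (Fin.castSucc_lt_last x).ne hx

lemma cnt_cast {m : ℕ} (X : Finset (Fin m)) (x : Fin m) :
    (X.val.map Fin.castSucc).count (Fin.castSucc x) = if x ∈ X then 1 else 0 := by
  rw [Multiset.count_map_eq_count' _ _ (Fin.castSucc_injective m)]
  split <;> rename_i h
  · exact Multiset.count_eq_one_of_mem X.nodup h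
  · exact Multiset.count_eq_zero_of_notMem h

/-- Three-party disjointness construction for plurality: given `X₁, X₂, X₃ ⊆ [m]`, the vote
multiset consists of one approval per element of each `Xᵢ` (as candidates in `[m] ⊆ [m+1]`)
plus two approvals for candidate `m+1` (`Fin.last m`).  If the `Xᵢ` are pairwise disjoint then
`m+1` is the unique plurality winner with score 2; if some `y` lies in all three sets and the
sets `Xᵢ \ {y}` are pairwise disjoint then `y` is the unique plurality winner with score 3. -/
theorem stmt_9 {m : ℕ} (X₁ X₂ X₃ : Finset (Fin m)) :
    ∀ votes : Multiset (Fin (m + 1)),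
      votes = X₁.val.map Fin.castSucc + X₂.val.map Fin.castSucc + X₃.val.map Fin.castSucc +
        (Fin.last m ::ₘ Fin.last m ::ₘ 0) →
    ((Disjoint X₁ X₂ ∧ Disjoint X₁ X₃ ∧ Disjoint X₂ X₃) →
      votes.count (Fin.last m) = 2 ∧
      ∀ c, c ≠ Fin.last m → votes.count c < votes.count (Fin.last m)) ∧
    (∀ y : Fin m, y ∈ X₁ → y ∈ X₂ → y ∈ X₃ →
      Disjoint (X₁.erase y) (X₂.erase y) → Disjoint (X₁.erase y) (X₃.erase y) →
      Disjoint (X₂.erase y) (X₃.erase y) →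
      votes.count (Fin.castSucc y) = 3 ∧
      ∀ c, c ≠ Fin.castSucc y → votes.count c < votes.count (Fin.castSucc y)) := by
  intro votes hv
  subst hv
  have hlast : ∀ x : Fin m, Fin.castSucc x ≠ Fin.last m := fun x => (Fin.castSucc_lt_last x).ne
  constructor
  · rintro ⟨h12, h13, h23⟩
    have hcl : (X₁.val.map Fin.castSucc + X₂.val.map Fin.castSucc + X₃.val.map Fin.castSucc +
        (Fin.last m ::ₘ Fin.last m ::ₘ 0)).count (Fin.last m) = 2 := by
      simp [Multiset.count_add, cnt_last, Multiset.count_cons]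
    refine ⟨hcl, fun c hc => ?_⟩
    rw [hcl]
    obtain ⟨x, rfl⟩ := Fin.exists_castSucc_eq.mpr hc
    have hc1 : Multiset.count (Fin.castSucc x) (Fin.last m ::ₘ Fin.last m ::ₘ 0) = 0 := by
      simp [Multiset.count_cons, (hlast x)]
    simp only [Multiset.count_add, cnt_cast, hc1, add_zero]
    by_cases h1 : x ∈ X₁
    · have h2 : x ∉ X₂ := fun h => (Finset.disjoint_left.mp h12 h1) h
      have h3 : x ∉ X₃ := fun h => (Finset.disjoint_left.mp h13 h1) h
      simp [h1, h2, h3]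
    · by_cases h2 : x ∈ X₂
      · have h3 : x ∉ X₃ := fun h => (Finset.disjoint_left.mp h23 h2) h
        simp [h1, h2, h3]
      · simp [h1, h2]; split <;> omega
  · intro y hy1 hy2 hy3 d12 d13 d23
    have hcy : (X₁.val.map Fin.castSucc + X₂.val.map Fin.castSucc + X₃.val.map Fin.castSucc +
        (Fin.last m ::ₘ Fin.last m ::ₘ 0)).count (Fin.castSucc y) = 3 := by
      simp [Multiset.count_add, cnt_cast, hy1, hy2, hy3, Multiset.count_cons, hlast y]
    refine ⟨hcy, fun c hc => ?_⟩
    rw [hcy]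
    by_cases hcl : c = Fin.last m
    · subst hcl; simp [Multiset.count_add, cnt_last, Multiset.count_cons]
    obtain ⟨x, rfl⟩ := Fin.exists_castSucc_eq.mpr hcl
    have hxy : x ≠ y := fun h => hc (by rw [h])
    have hc1 : Multiset.count (Fin.castSucc x) (Fin.last m ::ₘ Fin.last m ::ₘ 0) = 0 := by
      simp [Multiset.count_cons, (hlast x)]
    simp only [Multiset.count_add, cnt_cast, hc1, add_zero]
    have e1 : ∀ X : Finset (Fin m), x ∈ X → x ∈ X.erase y :=
      fun X h => Finset.mem_erase.mpr ⟨hxy, h⟩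
    by_cases h1 : x ∈ X₁
    · have h2 : x ∉ X₂ := fun h => (Finset.disjoint_left.mp d12 (e1 X₁ h1)) (e1 X₂ h)
      have h3 : x ∉ X₃ := fun h => (Finset.disjoint_left.mp d13 (e1 X₁ h1)) (e1 X₃ h)
      simp [h1, h2, h3]
    · by_cases h2 : x ∈ X₂
      · have h3 : x ∉ X₃ := fun h => (Finset.disjoint_left.mp d23 (e1 X₂ h2)) (e1 X₃ h)
        simp [h1, h2, h3]
      · simp [h1, h2]; split <;> omega
end

section
/- In the ε-winner lower-bound construction for plurality with m ≥ 1/ε: let ε ∈ (0,1) with 1/√ε an integer, x ∈ [1/√ε]^{1/√ε}, and i ∈ [1/√ε]. Over candidate set [1/√ε] × [1/√ε] and n votes, suppose each candidate (x_j, j) for j ∈ [1/√ε] receives (√ε/2)·n approvals from the first half of the stream, and each candidate (a, i) for a ∈ [1/√ε] receives (√ε/2)·n approvals from the second half. Then candidate (x_i, i) has plurality score √ε·n while every other candidate has score at most (√ε/2)·n; consequently (x_i, i) is the unique (√ε/8)-winner. -/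
lemma stmt_10_aux {n : ℕ} {α : Type*} (v v' : Fin n → α) (d : α) :
    ({a : Fin n | v' a = d}.ncard) ≤
      {a : Fin n | v a = d}.ncard + {a : Fin n | v' a ≠ v a}.ncard := by
  have h : {a : Fin n | v' a = d} ⊆ {a : Fin n | v a = d} ∪ {a : Fin n | v' a ≠ v a} := by
    intro a ha
    by_cases hv : v a = d
    · exact Or.inl hv
    · exact Or.inr (fun h => hv (h ▸ ha))
  exact (Set.ncard_le_ncard h (Set.toFinite _)).trans (Set.ncard_union_le _ _)

/-- ε-winner lower-bound construction for plurality with `m ≥ 1/ε`: with `r = 1/√ε`,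
candidates `[r] × [r]`, `x ∈ [r]^[r]`, `i ∈ [r]`, and `n` votes in which each candidate
`(x j, j)` (for `j ≠ i`) and each `(b, i)` (for `b ≠ x i`) receives `(√ε/2)·n` approvals,
candidate `(x i, i)` receives `√ε·n` approvals, and all other candidates receive none.
Then every candidate other than `(x i, i)` has score at most `(√ε/2)·n`, and `(x i, i)` is
the unique `(√ε/8)`-winner. -/
theorem stmt_10 {n r : ℕ} (hn : 0 < n) (ε : ℝ) (hε0 : 0 < ε) (hε1 : ε < 1)
    (hr : (r : ℝ) = 1 / Real.sqrt ε)
    (x : Fin r → Fin r) (i : Fin r) (v : Fin n → Fin r × Fin r)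
    (hA : ∀ j, j ≠ i → ({a : Fin n | v a = (x j, j)}.ncard : ℝ) = Real.sqrt ε / 2 * n)
    (hB : ∀ b : Fin r, b ≠ x i → ({a : Fin n | v a = (b, i)}.ncard : ℝ) = Real.sqrt ε / 2 * n)
    (hI : ({a : Fin n | v a = (x i, i)}.ncard : ℝ) = Real.sqrt ε * n)
    (hO : ∀ c : Fin r × Fin r, (∀ j, c ≠ (x j, j)) → c.2 ≠ i →
      ({a : Fin n | v a = c}.ncard : ℝ) = 0) :
    (∀ c, c ≠ (x i, i) → ({a : Fin n | v a = c}.ncard : ℝ) ≤ Real.sqrt ε / 2 * n) ∧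
    (∀ c : Fin r × Fin r,
      (∃ v' : Fin n → Fin r × Fin r,
        ({a : Fin n | v' a ≠ v a}.ncard : ℝ) ≤ Real.sqrt ε / 8 * n ∧
        ∀ d, {a : Fin n | v' a = d}.ncard ≤ {a : Fin n | v' a = c}.ncard) ↔ c = (x i, i)) := by
  have hs : 0 < Real.sqrt ε := Real.sqrt_pos.2 hε0
  have hn' : (0 : ℝ) < n := by exact_mod_cast hn
  have part1 : ∀ c, c ≠ (x i, i) →
      ({a : Fin n | v a = c}.ncard : ℝ) ≤ Real.sqrt ε / 2 * n := by
    intro c hc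
    by_cases h2 : c.2 = i
    · have hc' : c = (c.1, i) := by rw [← h2]
      by_cases hb : c.1 = x i
      · exact absurd (by rw [hc', hb]) hc
      · rw [hc']; exact le_of_eq (hB c.1 hb)
    · by_cases hj : ∃ j, c = (x j, j)
      · obtain ⟨j, rfl⟩ := hj
        have : j ≠ i := h2
        exact le_of_eq (hA j this)
      · push_neg at hj
        rw [hO c hj h2]
        positivity
  refine ⟨part1, fun c => ⟨?_, ?_⟩⟩
  · rintro ⟨v', hD, hw⟩
    by_contra hc
    have h1 := stmt_10_aux v' v (x i, i)  -- score(xi,i) ≤ score'(xi,i) + D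
    have h2 := stmt_10_aux v v' c         -- score'(c) ≤ score(c) + D
    have h3 := hw (x i, i)                -- score'(xi,i) ≤ score'(c)
    have h4 := part1 c hc
    have hsym : {a : Fin n | v a ≠ v' a} = {a : Fin n | v' a ≠ v a} := by
      ext a; simp [ne_comm]
    rw [hsym] at h1
    have h1' : (({a : Fin n | v a = (x i, i)}.ncard : ℝ)) ≤
        ({a : Fin n | v' a = (x i, i)}.ncard : ℝ) + ({a : Fin n | v' a ≠ v a}.ncard : ℝ) := by
      exact_mod_cast h1
    have h2' : (({a : Fin n | v' a = c}.ncard : ℝ)) ≤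
        ({a : Fin n | v a = c}.ncard : ℝ) + ({a : Fin n | v' a ≠ v a}.ncard : ℝ) := by
      exact_mod_cast h2
    have h3' : (({a : Fin n | v' a = (x i, i)}.ncard : ℝ)) ≤
        ({a : Fin n | v' a = c}.ncard : ℝ) := by exact_mod_cast h3
    have hpos : 0 < Real.sqrt ε * n := by positivity
    nlinarith [hI]
  · rintro rfl
    refine ⟨v, ?_, ?_⟩
    · have : {a : Fin n | v a ≠ v a} = ∅ := by ext a; simp
      rw [this]
      simp
      positivity
    · intro d
      by_cases hd : d = (x i, i)
      · rw [hd]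
      · have := part1 d hd
        have h5 : ({a : Fin n | v a = d}.ncard : ℝ) ≤ ({a : Fin n | v a = (x i, i)}.ncard : ℝ) := by
          rw [hI]; nlinarith
        exact_mod_cast h5
end
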